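/- For every n ≥ 1, the coefficients of the polynomial (−1)^{n−1}·p_n(x) are positive and form a log-concave (hence unimodal) sequence. -/

import Mathlib

open Polynomial Finset

/-- The Kalugin–Jeffrey polynomials: `p_1(x) = 1`,
`p_{n+1}(x) = −(nx + 3n − 1)p_n(x) + (1+x)p_n'(x)`. -/
noncomputable def p : ℕ → Polynomial ℤ
  | 0 => 0
  | 1 => 1
  | n+2 => -(C ((n : ℤ) + 1) * X + C (3 * ((n : ℤ) + 1) - 1)) * p (n+1) +
      (1 + X) * derivative (p (n+1))

/-!
Put `y = 1 + x`. Then `(-1)^n p_{n+1}(x) = q_n(y)` with `q_0 = 1` and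
`q_{n+1} = ((n+1)y + 2n+1) q_n - y q_n'`, i.e. the `y`-coefficients satisfy
`c'_j = (n+1) c_{j-1} + (2n+1-j) c_j`. Since the factor `2n+1-j` is affine in `j` and large on the
support, this recurrence keeps a positive sequence log-concave.

The substitution `y = 1 + x` also keeps positive sequences log-concave (Brenti): for
`a_i = ∑_j c_j C(j,i)` one has `a_{i+1}^2 - a_i a_{i+2} = ∑_s ∑_{j+k=s} c_j c_k δ_i(j,k)` with
`δ_i(j,k) = C(j,i+1) C(k,i+1) - C(j,i) C(k,i+2)`. Along each antidiagonal the weights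
`c_j c_{s-j}` are symmetric and grow towards the middle, the sum of all `δ_i` vanishes and its
central partial sums are nonnegative by TP₂ inequalities for binomial coefficients, so Abel
summation makes the inner sums nonnegative. A positive log-concave sequence is unimodal.
-/

namespace Nat

theorem choose_mul_choose_le_choose_mul_choose {a b p q : ℕ} (hab : a ≤ b) (hpq : p ≤ q) :
    a.choose q * b.choose p ≤ a.choose p * b.choose q := by
  induction q, hpq using Nat.le_induction with
  | base => exact le_rfl
  | succ q _ ih =>
    refine Nat.le_of_mul_le_mul_right ?_ q.succ_pos
    calc a.choose (q + 1) * b.choose p * (q + 1)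
        = a.choose q * b.choose p * (a - q) := by
          rw [mul_right_comm, choose_succ_right_eq, mul_right_comm]
      _ ≤ a.choose p * b.choose q * (b - q) := Nat.mul_le_mul ih (Nat.sub_le_sub_right hab q)
      _ = a.choose p * b.choose (q + 1) * (q + 1) := by rw [mul_assoc, ← choose_succ_right_eq]; ring

theorem succ_choose_add_two_mul_choose_le {a b i : ℕ} (hab : a ≤ b) :
    (a + 1).choose (i + 2) * b.choose i ≤ a.choose i * (b + 1).choose (i + 2) := by
  rw [choose_succ_succ' a, choose_succ_succ' b, add_mul, mul_add]
  exact add_le_add (choose_mul_choose_le_choose_mul_choose hab (le_succ i))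
    (choose_mul_choose_le_choose_mul_choose hab (by omega))

end Nat

def chooseDefect (i j k : ℕ) : ℤ :=
  j.choose (i + 1) * k.choose (i + 1) - j.choose i * k.choose (i + 2)

def chooseDefectTail (i u v : ℕ) : ℤ :=
  u.choose i * (v + 1).choose (i + 2) + u.choose (i + 1) * v.choose (i + 2)
    - (u + 1).choose (i + 2) * v.choose i - u.choose (i + 2) * v.choose (i + 1)

theorem chooseDefectTail_nonneg (i : ℕ) {u v : ℕ} (h : u ≤ v) : 0 ≤ chooseDefectTail i u v := by
  have h₁ : ((u + 1).choose (i + 2) * v.choose i : ℤ) ≤ u.choose i * (v + 1).choose (i + 2) := by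
    exact_mod_cast Nat.succ_choose_add_two_mul_choose_le h
  have h₂ : (u.choose (i + 2) * v.choose (i + 1) : ℤ) ≤ u.choose (i + 1) * v.choose (i + 2) := by
    exact_mod_cast Nat.choose_mul_choose_le_choose_mul_choose h (Nat.le_succ _)
  unfold chooseDefectTail
  linarith

theorem sum_Icc_chooseDefect (i d u : ℕ) :
    ∑ j ∈ Icc (u + 1) (u + d), chooseDefect i j (2 * u + d + 1 - j) =
      chooseDefectTail i u (u + d) := by
  induction d using Nat.twoStepInduction generalizing u with
  | zero => simp [chooseDefectTail]; ring
  | one =>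
    rw [Icc_self, sum_singleton, show 2 * u + 1 + 1 - (u + 1) = u + 1 by omega]
    simp only [chooseDefect, chooseDefectTail, Nat.choose_succ_succ', Nat.cast_add]
    ring
  | more d ih _ =>
    have hsplit : Icc (u + 1) (u + (d + 2)) =
        insert (u + 1) (insert (u + d + 2) (Icc (u + 1 + 1) (u + 1 + d))) := by
      ext j; simp; omega
    rw [hsplit, sum_insert (by simp; omega), sum_insert (by simp; omega)]
    rw [show 2 * u + (d + 2) + 1 = 2 * (u + 1) + d + 1 by ring, ih (u + 1)]
    rw [show 2 * (u + 1) + d + 1 - (u + 1) = u + d + 2 by omega,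
      show 2 * (u + 1) + d + 1 - (u + d + 2) = u + 1 by omega,
      show u + (d + 2) = u + d + 1 + 1 by ring, show u + 1 + d = u + d + 1 by ring]
    simp only [chooseDefect, chooseDefectTail, Nat.choose_succ_succ', Nat.cast_add]
    ring

theorem sum_range_chooseDefect (i s : ℕ) : ∑ j ∈ range (s + 1), chooseDefect i j (s - j) = 0 := by
  rcases s with _ | t
  · simp [chooseDefect]
  have hsplit : range (t + 1 + 1) = insert 0 (insert (t + 1) (Icc 1 t)) := by
    ext j; simp; omega
  have htail := sum_Icc_chooseDefect i t 0
  simp only [mul_zero, zero_add] at htail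
  rw [hsplit, sum_insert (by simp), sum_insert (by simp), htail]
  simp [chooseDefect, chooseDefectTail, Nat.choose_succ_succ']

theorem sum_mul_nonneg_of_sum_Icc_nonneg {R : Type*} [CommRing R] [PartialOrder R]
    [IsOrderedRing R] {s : ℕ} {w g : ℕ → R}
    (hw : ∀ j ≤ s, w (s - j) = w j) (hw₀ : 0 ≤ w 0) (hmono : ∀ t, 2 * t + 2 ≤ s → w t ≤ w (t + 1))
    (hg : 0 ≤ ∑ j ∈ range (s + 1), g j)
    (htail : ∀ t, 2 * t + 2 ≤ s → 0 ≤ ∑ j ∈ Icc (t + 1) (s - (t + 1)), g j) :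
    0 ≤ ∑ j ∈ range (s + 1), w j * g j := by
  -- Abel summation: each weight is `w 0` plus its increments from the ends towards `j`
  have hlayer : ∀ j ∈ range (s + 1),
      w j = w 0 + ∑ t ∈ range (min j (s - j)), (w (t + 1) - w t) := by
    intro j hj
    rw [sum_range_sub, add_sub_cancel]
    rcases le_total j (s - j) with h | h
    · rw [min_eq_left h]
    · rw [min_eq_right h, hw j (by simp at hj; omega)]
  calc 0 ≤ w 0 * ∑ j ∈ range (s + 1), g j +
        ∑ t ∈ range (s / 2), (w (t + 1) - w t) * ∑ j ∈ Icc (t + 1) (s - (t + 1)), g j :=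
      add_nonneg (mul_nonneg hw₀ hg) <| sum_nonneg fun t ht =>
        mul_nonneg (sub_nonneg.2 (hmono t (by simp at ht; omega))) (htail t (by simp at ht; omega))
    _ = ∑ j ∈ range (s + 1), w j * g j := by
      simp_rw [mul_sum]
      rw [sum_comm' (t' := range (s + 1)) (s' := fun j => range (min j (s - j)))
        (fun t j => by simp; omega), ← sum_add_distrib]
      refine sum_congr rfl fun j hj => ?_
      rw [hlayer j hj, add_mul, sum_mul]

theorem recurrence_mul_le_sq {R : Type*} [CommRing R] [LinearOrder R] [IsStrictOrderedRing R]
    {a α u₀ u₁ u₂ u₃ : R} (ha : 0 ≤ a) (hα : 2 ≤ α)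
    (h₀₂ : u₀ * u₂ ≤ u₁ ^ 2) (h₀₃ : u₀ * u₃ ≤ u₁ * u₂) (h₁₃ : u₁ * u₃ ≤ u₂ ^ 2) :
    (a * u₀ + α * u₁) * (a * u₂ + (α - 2) * u₃) ≤ (a * u₁ + (α - 1) * u₂) ^ 2 := by
  have hα₀ : 0 ≤ α - 2 := sub_nonneg.2 hα
  nlinarith [mul_le_mul_of_nonneg_left h₀₂ (sq_nonneg a),
    mul_le_mul_of_nonneg_left h₀₃ (mul_nonneg ha hα₀),
    mul_le_mul_of_nonneg_left h₁₃ (mul_nonneg (by linarith : (0 : R) ≤ α) hα₀), sq_nonneg u₂]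

namespace Polynomial

theorem coeff_X_pow_mul_hasseDeriv {R : Type*} [Semiring R] (f : R[X]) (p j : ℕ) :
    (X ^ p * hasseDeriv p f).coeff j = j.choose p * f.coeff j := by
  rw [coeff_X_pow_mul', hasseDeriv_coeff]
  split_ifs with h
  · rw [Nat.sub_add_cancel h]
  · rw [Nat.choose_eq_zero_of_lt (by omega), Nat.cast_zero, zero_mul]

theorem taylor_one_coeff_eq_eval {R : Type*} [CommSemiring R] (f : R[X]) (p : ℕ) :
    (taylor 1 f).coeff p = (X ^ p * hasseDeriv p f).eval 1 := by
  rw [taylor_coeff, eval_mul, eval_pow, eval_X, one_pow, one_mul]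

theorem coeff_le_eval_one {R : Type*} [CommSemiring R] [PartialOrder R] [IsOrderedRing R]
    {f : R[X]} (hf : ∀ n, 0 ≤ f.coeff n) (n : ℕ) : f.coeff n ≤ f.eval 1 := by
  rw [eval_eq_sum, sum_def]
  simp only [one_pow, mul_one]
  by_cases hn : n ∈ f.support
  · exact single_le_sum (fun k _ => hf k) hn
  · rw [notMem_support_iff.1 hn]
    exact sum_nonneg fun k _ => hf k

end Polynomial

section LogConcave

variable {R : Type*} [CommRing R] [LinearOrder R]

structure IsPosLogConcave (D : ℕ) (c : ℕ → R) : Prop where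
  pos : ∀ j ≤ D, 0 < c j
  eq_zero : ∀ j, D < j → c j = 0
  mul_le_sq : ∀ j, c j * c (j + 2) ≤ c (j + 1) ^ 2

namespace IsPosLogConcave

variable {D : ℕ} {c : ℕ → R}

theorem nonneg (hc : IsPosLogConcave D c) (j : ℕ) : 0 ≤ c j := by
  rcases le_or_gt j D with h | h
  · exact (hc.pos j h).le
  · exact (hc.eq_zero j h).ge

variable [IsStrictOrderedRing R]

theorem mul_succ_le_succ_mul (hc : IsPosLogConcave D c) {u v : ℕ} (huv : u ≤ v) :
    c u * c (v + 1) ≤ c (u + 1) * c v := by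
  induction v, huv using Nat.le_induction with
  | base => rw [mul_comm]
  | succ v huv ih =>
    rcases le_or_gt (v + 2) D with hv | hv
    · have hpos : 0 < c (v + 1) := hc.pos _ (by omega)
      refine le_of_mul_le_mul_right ?_ hpos
      calc c u * c (v + 1 + 1) * c (v + 1) = c u * c (v + 1) * c (v + 2) := by ring
        _ ≤ c (u + 1) * c v * c (v + 2) := mul_le_mul_of_nonneg_right ih (hc.nonneg _)
        _ = c (u + 1) * (c v * c (v + 2)) := by ring
        _ ≤ c (u + 1) * c (v + 1) ^ 2 := mul_le_mul_of_nonneg_left (hc.mul_le_sq v) (hc.nonneg _)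
        _ = c (u + 1) * c (v + 1) * c (v + 1) := by ring
    · rw [hc.eq_zero (v + 1 + 1) (by omega), mul_zero]
      exact mul_nonneg (hc.nonneg _) (hc.nonneg _)

theorem succ_succ_lt_of_succ_lt (hc : IsPosLogConcave D c) {k : ℕ} (hk : k + 1 ≤ D)
    (h : c (k + 1) < c k) :
    c (k + 2) < c (k + 1) := by
  have hk₀ : 0 < c k := hc.pos k (by omega)
  have hk₁ : 0 < c (k + 1) := hc.pos (k + 1) hk
  refine lt_of_mul_lt_mul_left ?_ hk₀.le
  calc c k * c (k + 2) ≤ c (k + 1) ^ 2 := hc.mul_le_sq k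
    _ < c k * c (k + 1) := by rw [sq]; exact mul_lt_mul_of_pos_right h hk₁

theorem exists_monotoneOn_antitoneOn (hc : IsPosLogConcave D c) :
    ∃ m ≤ D, MonotoneOn c (Set.Iic m) ∧ AntitoneOn c (Set.Icc m D) := by
  classical
  have hex : ∃ k, D ≤ k ∨ c (k + 1) < c k := ⟨D, Or.inl le_rfl⟩
  have hdesc : ∀ k, Nat.find hex ≤ k → k + 1 ≤ D → c (k + 1) < c k := by
    intro k hk
    induction k, hk using Nat.le_induction with
    | base => exact fun hD => (Nat.find_spec hex).resolve_left (by omega)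
    | succ k _ ih => exact fun hD => hc.succ_succ_lt_of_succ_lt (by omega) (ih (by omega))
  refine ⟨Nat.find hex, Nat.find_min' hex (Or.inl le_rfl), ?_, ?_⟩
  · refine monotoneOn_of_le_add_one Set.ordConnected_Iic fun k _ _ hk => ?_
    have := Nat.find_min hex (Nat.lt_of_succ_le hk)
    push Not at this
    exact this.2
  · exact antitoneOn_of_add_one_le Set.ordConnected_Icc fun k _ hk hk₁ =>
      (hdesc k hk.1 hk₁.2).le

theorem recurrence {f : R[X]} (hf : IsPosLogConcave D f.coeff) {a b : R} (ha : 0 < a)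
    (hb : (D : R) + 1 ≤ b) :
    IsPosLogConcave (D + 1) ((C a * X + C b) * f - X * derivative f).coeff := by
  set g := (C a * X + C b) * f - X * derivative f
  have hg₀ : g.coeff 0 = a * 0 + (b - (0 : ℕ)) * f.coeff 0 := by simp [g]
  have hg : ∀ j, g.coeff (j + 1) = a * f.coeff j + (b - (j + 1 : ℕ)) * f.coeff (j + 1) := by
    intro j; simp [g, coeff_X_mul, coeff_derivative, add_mul, mul_assoc]; ring
  have hD : ∀ j, j ≤ D → (j : R) ≤ D := fun j hj => by exact_mod_cast hj
  -- `u₀` plays the role of `f.coeff (j - 1)`, which is `0` at `j = 0`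
  have key : ∀ j u₀, j + 1 ≤ D → g.coeff j = a * u₀ + (b - j) * f.coeff j →
      u₀ * f.coeff (j + 1) ≤ f.coeff j ^ 2 → u₀ * f.coeff (j + 2) ≤ f.coeff j * f.coeff (j + 1) →
      g.coeff j * g.coeff (j + 2) ≤ g.coeff (j + 1) ^ 2 := by
    intro j u₀ hj hgj h₀₂ h₀₃
    have hα : 2 ≤ b - j := by have := hD (j + 1) hj; push_cast at this; linarith
    have := recurrence_mul_le_sq ha.le hα h₀₂ h₀₃ (hf.mul_le_sq j)
    rw [hgj, hg, hg]
    push_cast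
    linarith
  refine ⟨fun j hj => ?_, fun j hj => ?_, fun j => ?_⟩
  · rcases j with _ | j
    · rw [hg₀]
      have := hD 0 (Nat.zero_le D)
      nlinarith [hf.pos 0 (Nat.zero_le D)]
    · rw [hg]
      have := hD j (by omega)
      push_cast
      nlinarith [hf.pos j (by omega), hf.nonneg (j + 1)]
  · obtain ⟨k, rfl⟩ : ∃ k, j = k + 1 := ⟨j - 1, by omega⟩
    rw [hg, hf.eq_zero k (by omega), hf.eq_zero (k + 1) (by omega)]
    ring
  · rcases le_or_gt (j + 1) D with hj | hj
    · rcases j with _ | k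
      · exact key 0 0 hj hg₀ (by simp [sq_nonneg])
          (by simp [mul_nonneg (hf.nonneg 0) (hf.nonneg 1)])
      · exact key (k + 1) (f.coeff k) hj (hg k) (hf.mul_le_sq k)
          (hf.mul_succ_le_succ_mul (by omega))
    · rw [hg (j + 1), hf.eq_zero (j + 1) hj, hf.eq_zero (j + 1 + 1) (by omega)]
      simp [sq_nonneg]

theorem taylor_one {f : R[X]} (hf : IsPosLogConcave D f.coeff) :
    IsPosLogConcave D (taylor 1 f).coeff := by
  set G : ℕ → R[X] := fun p => X ^ p * hasseDeriv p f
  have hG : ∀ p j, (G p).coeff j = j.choose p * f.coeff j := coeff_X_pow_mul_hasseDeriv f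
  have hGnonneg : ∀ p j, 0 ≤ (G p).coeff j := fun p j => by
    rw [hG]; exact mul_nonneg (Nat.cast_nonneg _) (hf.nonneg j)
  refine ⟨fun i hi => ?_, fun i hi => ?_, fun i => ?_⟩
  · calc 0 < f.coeff i := hf.pos i hi
      _ = (G i).coeff i := by rw [hG, Nat.choose_self, Nat.cast_one, one_mul]
      _ ≤ (taylor 1 f).coeff i := by
        rw [taylor_one_coeff_eq_eval]; exact coeff_le_eval_one (hGnonneg i) i
  · refine coeff_eq_zero_of_natDegree_lt ?_
    rw [natDegree_taylor]
    exact (natDegree_le_iff_coeff_eq_zero.2 hf.eq_zero).trans_lt hi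
  · set P := G (i + 1) * G (i + 1) - G i * G (i + 2)
    have hP : ∀ s, P.coeff s =
        ∑ j ∈ range (s + 1), f.coeff j * f.coeff (s - j) * (chooseDefect i j (s - j) : R) := by
      intro s
      rw [coeff_sub, coeff_mul, coeff_mul, ← sum_sub_distrib,
        Nat.sum_antidiagonal_eq_sum_range_succ
          (fun j k =>
            (G (i + 1)).coeff j * (G (i + 1)).coeff k - (G i).coeff j * (G (i + 2)).coeff k)]
      refine sum_congr rfl fun j _ => ?_
      simp only [hG, chooseDefect]
      push_cast
      ring
    have hPnonneg : ∀ s, 0 ≤ P.coeff s := by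
      intro s
      rw [hP]
      refine sum_mul_nonneg_of_sum_Icc_nonneg (fun j hj => ?_)
        (mul_nonneg (hf.nonneg _) (hf.nonneg _)) (fun t ht => ?_) ?_ (fun t ht => ?_)
      · rw [Nat.sub_sub_self hj, mul_comm]
      · have := hf.mul_succ_le_succ_mul (u := t) (v := s - (t + 1)) (by omega)
        rwa [show s - (t + 1) + 1 = s - t by omega] at this
      · rw [← Int.cast_sum, sum_range_chooseDefect, Int.cast_zero]
      · obtain ⟨d, rfl⟩ : ∃ d, s = 2 * t + d + 1 := ⟨s - 2 * t - 1, by omega⟩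
        rw [← Int.cast_sum, show 2 * t + d + 1 - (t + 1) = t + d by omega, sum_Icc_chooseDefect]
        exact Int.cast_nonneg (chooseDefectTail_nonneg i (by omega))
    have hPeval : P.eval 1 = (G (i + 1)).eval 1 ^ 2 - (G i).eval 1 * (G (i + 2)).eval 1 := by
      simp only [P, eval_sub, eval_mul]
      ring
    have := (hPnonneg 0).trans (coeff_le_eval_one hPnonneg 0)
    rw [hPeval] at this
    simp only [taylor_one_coeff_eq_eval]
    exact sub_nonneg.1 this

end IsPosLogConcave

end LogConcave

noncomputable def q : ℕ → ℤ[X]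
  | 0 => 1
  | n + 1 => (C ((n : ℤ) + 1) * X + C (2 * (n : ℤ) + 1)) * q n - X * derivative (q n)

theorem taylor_one_q (n : ℕ) : taylor 1 (q n) = (-1 : ℤ) ^ n • p (n + 1) := by
  induction n with
  | zero => simp [q, p]
  | succ n ih =>
    have hderiv : taylor 1 (derivative (q n)) = derivative (taylor 1 (q n)) := by
      simp [taylor_apply, derivative_comp]
    rw [q, map_sub, taylor_mul, taylor_mul, hderiv, ih, p, map_add, taylor_mul, taylor_C, taylor_C,
      taylor_X, smul_eq_C_mul, smul_eq_C_mul, derivative_C_mul, pow_succ, map_mul]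
    simp only [map_add, map_sub, map_mul, map_neg, map_one, map_natCast, map_ofNat]
    ring

theorem isPosLogConcave_q (n : ℕ) : IsPosLogConcave n (q n).coeff := by
  induction n with
  | zero =>
    refine ⟨fun j hj => ?_, fun j hj => ?_, fun j => ?_⟩
    · simp [q, Nat.le_zero.1 hj]
    · simp [q, coeff_one, hj.ne']
    · simp [q, coeff_one]
  | succ n ih =>
    exact ih.recurrence (by positivity) (by omega)

/-- For `n ≥ 1`, the coefficients of `(−1)^{n−1} p_n(x)` (in degrees `0, …, n−1`) are
positive, log-concave, and hence unimodal. -/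
theorem p_coeffs_positive_log_concave_unimodal (n : ℕ) (hn : 1 ≤ n) :
    (∀ i < n, 0 < (((-1 : ℤ) ^ (n - 1)) • p n).coeff i) ∧
    (∀ i, 1 ≤ i →
      (((-1 : ℤ) ^ (n - 1)) • p n).coeff (i - 1) * (((-1 : ℤ) ^ (n - 1)) • p n).coeff (i + 1) ≤
        ((((-1 : ℤ) ^ (n - 1)) • p n).coeff i) ^ 2) ∧
    (∃ m ≤ n - 1,
      (∀ i j, i ≤ j → j ≤ m →
        (((-1 : ℤ) ^ (n - 1)) • p n).coeff i ≤ (((-1 : ℤ) ^ (n - 1)) • p n).coeff j) ∧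
      (∀ i j, m ≤ i → i ≤ j → j ≤ n - 1 →
        (((-1 : ℤ) ^ (n - 1)) • p n).coeff j ≤ (((-1 : ℤ) ^ (n - 1)) • p n).coeff i)) := by
  obtain ⟨n, rfl⟩ : ∃ k, n = k + 1 := ⟨n - 1, by omega⟩
  have h := (isPosLogConcave_q n).taylor_one
  rw [taylor_one_q] at h
  rw [Nat.add_sub_cancel]
  obtain ⟨m, hm, hmono, hanti⟩ := h.exists_monotoneOn_antitoneOn
  refine ⟨fun i hi => h.pos i (by omega), fun i hi => ?_, m, hm,
    fun i j hij hjm => hmono (Set.mem_Iic.2 (hij.trans hjm)) (Set.mem_Iic.2 hjm) hij,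
    fun i j hmi hij hjn => hanti ⟨hmi, hij.trans hjn⟩ ⟨hmi.trans hij, hjn⟩ hij⟩
  obtain ⟨k, rfl⟩ : ∃ k, i = k + 1 := ⟨i - 1, by omega⟩
  exact h.mul_le_sq k
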